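/- arXiv:1805.07618 — 3 statements merged into one kernel-verified Lean document; each statement's English description precedes it below -/
import Mathlib

section
/- Let ξ, d > 0 and define the Carleman weight φ_λ(z) = e^{−2λz}. There exist constants C̃ = C̃(ξ,d) > 0 and λ₀ = λ₀(ξ,d) > 1 such that for all λ ≥ λ₀ and all real-valued functions w ∈ H²(−ξ, d) with w(−ξ) = w'(−ξ) = 0, one has ∫_{−ξ}^d (w'')² φ_λ(z) dz ≥ C̃ ∫_{−ξ}^d (w'')² φ_λ(z) dz + C̃ λ ∫_{−ξ}^d (w')² φ_λ(z) dz + C̃ λ³ ∫_{−ξ}^d w² φ_λ(z) dz. -/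
/-!
If `f a = 0`, then `f ^ 2 e^{-2λz}` vanishes at `a` and is nonnegative at `b`, so its derivative
`(2 f f' - 2 λ f ^ 2) e^{-2λz}` has nonnegative integral over `[a, b]`. Since
`λ (2 x y - 2 λ x ^ 2) = y ^ 2 - λ ^ 2 x ^ 2 - (y - λ x) ^ 2`, this yields the weighted Poincaré
inequality `λ² ∫ f² e^{-2λz} ≤ ∫ f'² e^{-2λz}`. Applying it to `w` and to `w'` gives
`λ⁴ ∫ w² φ_λ ≤ λ² ∫ w'² φ_λ ≤ ∫ w''² φ_λ`, and for `λ ≥ 2` the estimate holds with `C̃ = 1/4`.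
-/

open intervalIntegral

section WeightedPoincare

variable {a b lam : ℝ} {f f' : ℝ → ℝ}

lemma hasDerivAt_sq_mul_exp {x : ℝ} (hf : HasDerivAt f (f' x) x) :
    HasDerivAt (fun z => f z ^ 2 * Real.exp (-2 * lam * z))
      ((2 * f x * f' x - 2 * lam * f x ^ 2) * Real.exp (-2 * lam * x)) x := by
  have hexp : HasDerivAt (fun z => Real.exp (-2 * lam * z))
      (Real.exp (-2 * lam * x) * (-2 * lam)) x := by
    simpa using ((hasDerivAt_id x).const_mul (-2 * lam)).exp
  exact ((hf.fun_pow 2).fun_mul hexp).congr_deriv (by push_cast; ring)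

lemma mul_two_mul_sub_le (lam x y : ℝ) :
    lam * (2 * x * y - 2 * lam * x ^ 2) ≤ y ^ 2 - lam ^ 2 * x ^ 2 := by
  nlinarith [sq_nonneg (y - lam * x)]

theorem sq_mul_integral_sq_mul_exp_le (hab : a ≤ b) (hlam : 0 ≤ lam)
    (hf : ∀ z ∈ Set.Icc a b, HasDerivAt f (f' z) z) (hf' : ContinuousOn f' (Set.Icc a b))
    (hfa : f a = 0) :
    lam ^ 2 * ∫ z in a..b, f z ^ 2 * Real.exp (-2 * lam * z) ≤
      ∫ z in a..b, f' z ^ 2 * Real.exp (-2 * lam * z) := by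
  have hfc : ContinuousOn f (Set.Icc a b) := fun z hz =>
    (hf z hz).continuousAt.continuousWithinAt
  have hint : ∀ {g : ℝ → ℝ}, ContinuousOn g (Set.Icc a b) →
      IntervalIntegrable g MeasureTheory.volume a b :=
    fun hg => hg.intervalIntegrable_of_Icc hab
  have hI : IntervalIntegrable (fun z => f z ^ 2 * Real.exp (-2 * lam * z))
      MeasureTheory.volume a b := hint (by fun_prop)
  have hI' : IntervalIntegrable (fun z => f' z ^ 2 * Real.exp (-2 * lam * z))
      MeasureTheory.volume a b := hint (by fun_prop)
  have hID : IntervalIntegrable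
      (fun z => (2 * f z * f' z - 2 * lam * f z ^ 2) * Real.exp (-2 * lam * z))
      MeasureTheory.volume a b := hint (by fun_prop)
  have hftc : ∫ z in a..b, (2 * f z * f' z - 2 * lam * f z ^ 2) * Real.exp (-2 * lam * z) =
      f b ^ 2 * Real.exp (-2 * lam * b) := by
    rw [integral_eq_sub_of_hasDerivAt
      (fun z hz => hasDerivAt_sq_mul_exp (hf z (Set.uIcc_of_le hab ▸ hz))) hID, hfa]
    ring
  have hmono : lam * ∫ z in a..b, (2 * f z * f' z - 2 * lam * f z ^ 2) * Real.exp (-2 * lam * z)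
      ≤ ∫ z in a..b, (f' z ^ 2 * Real.exp (-2 * lam * z)
          - lam ^ 2 * (f z ^ 2 * Real.exp (-2 * lam * z))) := by
    rw [← integral_const_mul]
    refine integral_mono_on hab (hID.const_mul lam) (hI'.sub (hI.const_mul _)) fun z _ => ?_
    have := mul_le_mul_of_nonneg_right (mul_two_mul_sub_le lam (f z) (f' z))
      (Real.exp_pos (-2 * lam * z)).le
    linarith
  rw [integral_sub hI' (hI.const_mul _), integral_const_mul] at hmono
  have hnonneg : 0 ≤ lam *
      ∫ z in a..b, (2 * f z * f' z - 2 * lam * f z ^ 2) * Real.exp (-2 * lam * z) :=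
    mul_nonneg hlam (by rw [hftc]; positivity)
  linarith

end WeightedPoincare

lemma quarter_sum_le_of_sq_mul_le {lam A B C : ℝ} (hlam : 2 ≤ lam) (hBA : lam ^ 2 * B ≤ A)
    (hCB : lam ^ 2 * C ≤ B) (hC : 0 ≤ C) :
    1 / 4 * A + 1 / 4 * lam * B + 1 / 4 * lam ^ 3 * C ≤ A := by
  have hB : 0 ≤ B := by nlinarith
  nlinarith [mul_le_mul_of_nonneg_left hCB (by linarith : (0 : ℝ) ≤ lam),
    mul_nonneg (mul_nonneg (by linarith : (0 : ℝ) ≤ lam - 2) (by linarith : (0 : ℝ) ≤ lam)) hB]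

/-- 1D Carleman estimate (7.5): there exist `C̃ = C̃(ξ,d) > 0` and `λ₀ = λ₀(ξ,d) > 1`
such that for all `λ ≥ λ₀` and all real-valued `w ∈ H²(−ξ,d)` with
`w(−ξ) = w'(−ξ) = 0`,
`∫ (w'')² φ_λ ≥ C̃ ∫ (w'')² φ_λ + C̃ λ ∫ (w')² φ_λ + C̃ λ³ ∫ w² φ_λ`,
where `φ_λ(z) = e^{−2λz}`. -/
theorem carleman_1d (ξ d : ℝ) (hξ : 0 < ξ) (hd : 0 < d) :
    ∃ Ct > (0 : ℝ), ∃ lam₀ > (1 : ℝ), ∀ lam ≥ lam₀,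
      ∀ w w' w'' : ℝ → ℝ,
        (∀ z ∈ Set.Icc (-ξ) d, HasDerivAt w (w' z) z) →
        (∀ z ∈ Set.Icc (-ξ) d, HasDerivAt w' (w'' z) z) →
        ContinuousOn w'' (Set.Icc (-ξ) d) →
        w (-ξ) = 0 → w' (-ξ) = 0 →
        (∫ z in (-ξ)..d, (w'' z) ^ 2 * Real.exp (-2 * lam * z)) ≥
          Ct * (∫ z in (-ξ)..d, (w'' z) ^ 2 * Real.exp (-2 * lam * z))
          + Ct * lam * (∫ z in (-ξ)..d, (w' z) ^ 2 * Real.exp (-2 * lam * z))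
          + Ct * lam ^ 3 * (∫ z in (-ξ)..d, (w z) ^ 2 * Real.exp (-2 * lam * z)) := by
  refine ⟨1 / 4, by norm_num, 2, by norm_num, fun lam hlam w w' w'' hw hw' hw'' hw0 hw'0 => ?_⟩
  have hab : -ξ ≤ d := by linarith
  have hlam0 : 0 ≤ lam := by linarith
  have hw'c : ContinuousOn w' (Set.Icc (-ξ) d) := fun z hz =>
    (hw' z hz).continuousAt.continuousWithinAt
  exact quarter_sum_le_of_sq_mul_le hlam
    (sq_mul_integral_sq_mul_exp_le hab hlam0 hw' hw'' hw'0)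
    (sq_mul_integral_sq_mul_exp_le hab hlam0 hw hw'c hw0)
    (integral_nonneg hab fun z _ => by positivity)
end

section
/- Let ξ, d, h > 0, N ∈ ℕ, and let φ_λ(z) = e^{−2λz}. Suppose the 1D Carleman estimate holds: there are C̃(ξ,d) > 0 and λ₀(ξ,d) > 1 with ∫_{−ξ}^d (w'')² φ_λ dz ≥ C̃[∫ (w'')² φ_λ dz + λ ∫ (w')² φ_λ dz + λ³ ∫ w² φ_λ dz] for all λ ≥ λ₀ and all w ∈ H²(−ξ,d) with w(−ξ) = w'(−ξ) = 0. Consider a family of functions u(j,s,·) ∈ H²(−ξ,d), 1 ≤ j,s ≤ N, each vanishing with its z-derivative at z = −ξ (and at grid boundary points), and the semidiscrete Laplacian Δʰu = u_zz + u_xxʰ + u_yyʰ, where u_xxʰ, u_yyʰ are the standard second-order central difference quotients in the grid indices with step h. Then there exist C = C(ξ,d,h) > 0 and λ₁ = λ₁(ξ,d,h) ≥ λ₀ such that for all λ ≥ λ₁: Σ_{j,s} h² ∫_{−ξ}^d |Δʰu(j,s,z)|² φ_λ(z) dz ≥ C Σ_{j,s} h² ∫ |u_zz|² φ_λ dz +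 C λ Σ_{j,s} h² ∫ |u_z|² φ_λ dz + C λ³ Σ_{j,s} h² ∫ |u|² φ_λ dz. -/
/-!
Apply the one-dimensional estimate to the real and imaginary parts of every `u j s` and sum over
the grid. Pointwise in `z`, `‖Δʰu‖² ≥ ½‖u_zz‖² - 2‖u_xxʰ‖² - 2‖u_yyʰ‖²`, and because `u` vanishes
off the grid box, shifting an index does not increase a grid sum; so the difference quotients cost
at most `72 / h⁴` times the grid sum of `‖u‖²`. Once `C̃ λ³ ≥ 4 · 72 / h⁴` this is absorbed by half
of the `λ³` term of the Carleman estimate, which leaves the constant `C̃ / 4`.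
-/

open intervalIntegral

/-- The semidiscrete Laplacian `Δʰu = u_zz + u_xxʰ + u_yyʰ`, where `uzz` is the second
`z`-derivative and the `x,y` parts are second-order central difference quotients with step `h`. -/
noncomputable def discLap (h : ℝ) (u uzz : ℤ → ℤ → ℝ → ℂ) (j s : ℤ) (z : ℝ) : ℂ :=
  uzz j s z
    + (u (j - 1) s z - 2 * u j s z + u (j + 1) s z) / (h : ℂ) ^ 2
    + (u j (s - 1) z - 2 * u j s z + u j (s + 1) z) / (h : ℂ) ^ 2

section Pointwise

variable {E : Type*} [SeminormedAddCommGroup E]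

lemma norm_add_sq_le_two_mul (a b : E) : ‖a + b‖ ^ 2 ≤ 2 * (‖a‖ ^ 2 + ‖b‖ ^ 2) :=
  (pow_le_pow_left₀ (norm_nonneg _) (norm_add_le a b) 2).trans add_sq_le

lemma norm_sq_le_two_mul_norm_add_sq_add (a b : E) :
    ‖a‖ ^ 2 ≤ 2 * (‖a + b‖ ^ 2 + ‖b‖ ^ 2) := by
  simpa using norm_add_sq_le_two_mul (a + b) (-b)

end Pointwise

lemma norm_sq_second_difference_le (a b c : ℂ) :
    ‖a - 2 * b + c‖ ^ 2 ≤ 6 * (‖a‖ ^ 2 + ‖b‖ ^ 2 + ‖c‖ ^ 2) := by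
  have htri : ‖a - 2 * b + c‖ ≤ ‖a‖ + 2 * ‖b‖ + ‖c‖ := by
    calc ‖a - 2 * b + c‖ ≤ ‖a - 2 * b‖ + ‖c‖ := norm_add_le _ _
      _ ≤ ‖a‖ + ‖2 * b‖ + ‖c‖ := by gcongr; exact norm_sub_le _ _
      _ = ‖a‖ + 2 * ‖b‖ + ‖c‖ := by rw [norm_mul, Complex.norm_two]
  calc ‖a - 2 * b + c‖ ^ 2 ≤ (‖a‖ + 2 * ‖b‖ + ‖c‖) ^ 2 := by gcongr
    _ ≤ 6 * (‖a‖ ^ 2 + ‖b‖ ^ 2 + ‖c‖ ^ 2) := by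
      nlinarith [sq_nonneg (2 * ‖a‖ - ‖b‖), sq_nonneg (2 * ‖c‖ - ‖b‖), sq_nonneg (‖a‖ - ‖c‖)]

lemma norm_div_ofReal_sq_sq (x : ℂ) (h : ℝ) : ‖x / (h : ℂ) ^ 2‖ ^ 2 = ‖x‖ ^ 2 / h ^ 4 := by
  rw [norm_div, norm_pow, Complex.norm_real, Real.norm_eq_abs, div_pow, ← pow_mul,
    (by decide : Even (2 * 2)).pow_abs]

lemma Finset.sum_comp_le_of_injective {α M : Type*} [AddCommMonoid M] [PartialOrder M]
    [IsOrderedAddMonoid M] {S : Finset α} {g : α → M} {e : α → α} (he : Function.Injective e)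
    (hg : ∀ x, 0 ≤ g x) (hS : ∀ x ∉ S, g x = 0) :
    ∑ x ∈ S, g (e x) ≤ ∑ x ∈ S, g x := by
  classical
  calc ∑ x ∈ S, g (e x) = ∑ y ∈ S.image e, g y := (Finset.sum_image fun _ _ _ _ h => he h).symm
    _ = ∑ y ∈ S.image e with y ∈ S, g y :=
        (Finset.sum_filter_of_ne fun y _ hy => by_contra fun hyS => hy (hS y hyS)).symm
    _ ≤ ∑ y ∈ S, g y :=
        Finset.sum_le_sum_of_subset_of_nonneg (fun y hy => (Finset.mem_filter.mp hy).2)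
          fun y _ _ => hg y

noncomputable def gridNormSq (N : ℕ) (v : ℤ → ℤ → ℂ) : ℝ :=
  ∑ j ∈ Finset.Icc (1 : ℤ) N, ∑ s ∈ Finset.Icc (1 : ℤ) N, ‖v j s‖ ^ 2

section Grid

open Finset

variable {N : ℕ} {v : ℤ → ℤ → ℂ}

lemma gridNormSq_shift_le (hv : ∀ j s, (j ∉ Icc (1 : ℤ) N ∨ s ∉ Icc (1 : ℤ) N) → v j s = 0)
    (a b : ℤ) : gridNormSq N (fun j s => v (j + a) (s + b)) ≤ gridNormSq N v :=
  calc ∑ j ∈ Icc (1 : ℤ) N, ∑ s ∈ Icc (1 : ℤ) N, ‖v (j + a) (s + b)‖ ^ 2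
      ≤ ∑ j ∈ Icc (1 : ℤ) N, ∑ s ∈ Icc (1 : ℤ) N, ‖v (j + a) s‖ ^ 2 :=
        sum_le_sum fun j _ => sum_comp_le_of_injective (g := fun s => ‖v (j + a) s‖ ^ 2)
          (add_left_injective b)
          (fun _ => by positivity) fun s hs => by simp [hv _ s (Or.inr hs)]
    _ ≤ ∑ j ∈ Icc (1 : ℤ) N, ∑ s ∈ Icc (1 : ℤ) N, ‖v j s‖ ^ 2 :=
        sum_comp_le_of_injective (g := fun j => ∑ s ∈ Icc (1 : ℤ) N, ‖v j s‖ ^ 2)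
          (add_left_injective a) (fun _ => by positivity)
          fun j hj => sum_eq_zero fun s _ => by simp [hv j s (Or.inl hj)]

lemma gridNormSq_secondDiff_le (hv : ∀ j s, (j ∉ Icc (1 : ℤ) N ∨ s ∉ Icc (1 : ℤ) N) → v j s = 0)
    (a b : ℤ) (h : ℝ) :
    gridNormSq N (fun j s => (v (j - a) (s - b) - 2 * v j s + v (j + a) (s + b)) / (h : ℂ) ^ 2)
      ≤ 18 / h ^ 4 * gridNormSq N v := by
  have hback : gridNormSq N (fun j s => v (j - a) (s - b)) ≤ gridNormSq N v := by
    simpa only [sub_eq_add_neg] using gridNormSq_shift_le hv (-a) (-b)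
  calc _ ≤ 6 / h ^ 4 * (gridNormSq N (fun j s => v (j - a) (s - b)) + gridNormSq N v
          + gridNormSq N (fun j s => v (j + a) (s + b))) := by
        simp only [gridNormSq, ← sum_add_distrib, mul_sum]
        refine sum_le_sum fun j _ => sum_le_sum fun s _ => ?_
        rw [norm_div_ofReal_sq_sq, div_mul_eq_mul_div]
        gcongr ?_ / _
        exact norm_sq_second_difference_le _ _ _
    _ ≤ 6 / h ^ 4 * (gridNormSq N v + gridNormSq N v + gridNormSq N v) := by
        gcongr
        exact gridNormSq_shift_le hv a b
    _ = 18 / h ^ 4 * gridNormSq N v := by ring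

lemma gridNormSq_discLap_ge (h : ℝ) (u uzz : ℤ → ℤ → ℝ → ℂ) (z : ℝ)
    (hu : ∀ j s, (j ∉ Icc (1 : ℤ) N ∨ s ∉ Icc (1 : ℤ) N) → u j s z = 0) :
    gridNormSq N (fun j s => uzz j s z) / 2 - 72 / h ^ 4 * gridNormSq N (fun j s => u j s z)
      ≤ gridNormSq N (fun j s => discLap h u uzz j s z) := by
  set Dx : ℤ → ℤ → ℂ := fun j s => (u (j - 1) s z - 2 * u j s z + u (j + 1) s z) / (h : ℂ) ^ 2
  set Dy : ℤ → ℤ → ℂ := fun j s => (u j (s - 1) z - 2 * u j s z + u j (s + 1) z) / (h : ℂ) ^ 2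
  have hpoint : ∀ j s, ‖uzz j s z‖ ^ 2 / 2 - 2 * ‖Dx j s‖ ^ 2 - 2 * ‖Dy j s‖ ^ 2
      ≤ ‖discLap h u uzz j s z‖ ^ 2 := fun j s => by
    have h₁ := norm_sq_le_two_mul_norm_add_sq_add (uzz j s z) (Dx j s + Dy j s)
    have h₂ := norm_add_sq_le_two_mul (Dx j s) (Dy j s)
    rw [← add_assoc] at h₁
    change _ ≤ 2 * (‖discLap h u uzz j s z‖ ^ 2 + _) at h₁
    linarith
  have hsum : gridNormSq N (fun j s => uzz j s z) / 2 - 2 * gridNormSq N Dx - 2 * gridNormSq N Dy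
      ≤ gridNormSq N (fun j s => discLap h u uzz j s z) := by
    simp only [gridNormSq, sum_div, mul_sum, ← sum_sub_distrib]
    exact sum_le_sum fun j _ => sum_le_sum fun s _ => hpoint j s
  have hx : gridNormSq N Dx ≤ 18 / h ^ 4 * gridNormSq N (fun j s => u j s z) := by
    simpa only [sub_zero, add_zero] using gridNormSq_secondDiff_le hu 1 0 h
  have hy : gridNormSq N Dy ≤ 18 / h ^ 4 * gridNormSq N (fun j s => u j s z) := by
    simpa only [sub_zero, add_zero] using gridNormSq_secondDiff_le hu 0 1 h
  have hK : 72 / h ^ 4 * gridNormSq N (fun j s => u j s z)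
      = 2 * (18 / h ^ 4 * gridNormSq N (fun j s => u j s z))
        + 2 * (18 / h ^ 4 * gridNormSq N (fun j s => u j s z)) := by ring
  linarith

end Grid

noncomputable def gridEnergy (N : ℕ) (h a b lam : ℝ) (f : ℤ → ℤ → ℝ → ℂ) : ℝ :=
  ∑ j ∈ Finset.Icc (1 : ℤ) N, ∑ s ∈ Finset.Icc (1 : ℤ) N,
    h ^ 2 * ∫ z in a..b, ‖f j s z‖ ^ 2 * Real.exp (-2 * lam * z)

section Energy

open Finset

variable {N : ℕ} {h a b lam : ℝ}

lemma gridEnergy_nonneg (hab : a ≤ b) (f : ℤ → ℤ → ℝ → ℂ) : 0 ≤ gridEnergy N h a b lam f :=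
  sum_nonneg fun _ _ => sum_nonneg fun _ _ =>
    mul_nonneg (sq_nonneg h) (integral_nonneg hab fun _ _ => by positivity)

lemma gridEnergy_eq_integral {f : ℤ → ℤ → ℝ → ℂ} (hf : ∀ j s, Continuous (f j s)) :
    gridEnergy N h a b lam f
      = h ^ 2 * ∫ z in a..b, gridNormSq N (fun j s => f j s z) * Real.exp (-2 * lam * z) := by
  simp only [gridEnergy, gridNormSq, sum_mul]
  rw [integral_finsetSum fun j _ => Continuous.intervalIntegrable (by fun_prop) a b, mul_sum]
  refine sum_congr rfl fun j _ => ?_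
  rw [integral_finsetSum fun s _ => Continuous.intervalIntegrable (by fun_prop) a b, mul_sum]

lemma gridEnergy_discLap_ge (hab : a ≤ b) {u uzz : ℤ → ℤ → ℝ → ℂ}
    (hu : ∀ j s, Continuous (u j s)) (huzz : ∀ j s, Continuous (uzz j s))
    (hbox : ∀ j s z, (j ∉ Icc (1 : ℤ) N ∨ s ∉ Icc (1 : ℤ) N) → u j s z = 0) :
    gridEnergy N h a b lam uzz / 2 - 72 / h ^ 4 * gridEnergy N h a b lam u
      ≤ gridEnergy N h a b lam (discLap h u uzz) := by
  have hΔ : ∀ j s, Continuous (discLap h u uzz j s) := fun j s => by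
    unfold discLap
    fun_prop
  have hcont : ∀ f : ℤ → ℤ → ℝ → ℂ, (∀ j s, Continuous (f j s)) →
      IntervalIntegrable (fun z => gridNormSq N (fun j s => f j s z) * Real.exp (-2 * lam * z))
        MeasureTheory.volume a b := fun f hf => by
    exact Continuous.intervalIntegrable (by unfold gridNormSq; fun_prop) a b
  rw [gridEnergy_eq_integral hu, gridEnergy_eq_integral huzz, gridEnergy_eq_integral hΔ]
  have hmono := integral_mono_on hab (((hcont uzz huzz).div_const 2).sub
      ((hcont u hu).const_mul (72 / h ^ 4))) (hcont _ hΔ) fun z _ =>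
    calc _ = (gridNormSq N (fun j s => uzz j s z) / 2
          - 72 / h ^ 4 * gridNormSq N (fun j s => u j s z)) * Real.exp (-2 * lam * z) := by ring
      _ ≤ _ := mul_le_mul_of_nonneg_right (gridNormSq_discLap_ge h u uzz z (hbox · · z))
          (Real.exp_pos _).le
  rw [integral_sub ((hcont uzz huzz).div_const 2) ((hcont u hu).const_mul _), integral_div,
    integral_const_mul] at hmono
  have := mul_le_mul_of_nonneg_left hmono (sq_nonneg h)
  linarith

end Energy

def CarlemanEstimate (a b Ct lam : ℝ) : Prop :=
  ∀ w w' w'' : ℝ → ℝ,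
    (∀ z ∈ Set.Icc a b, HasDerivAt w (w' z) z) →
    (∀ z ∈ Set.Icc a b, HasDerivAt w' (w'' z) z) →
    ContinuousOn w'' (Set.Icc a b) → w a = 0 → w' a = 0 →
    Ct * (∫ z in a..b, (w'' z) ^ 2 * Real.exp (-2 * lam * z))
      + Ct * lam * (∫ z in a..b, (w' z) ^ 2 * Real.exp (-2 * lam * z))
      + Ct * lam ^ 3 * (∫ z in a..b, (w z) ^ 2 * Real.exp (-2 * lam * z))
      ≤ ∫ z in a..b, (w'' z) ^ 2 * Real.exp (-2 * lam * z)

section Carleman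

variable {a b Ct lam : ℝ}

lemma integral_norm_sq_mul_exp_eq (hab : a ≤ b) {f : ℝ → ℂ} (hf : ContinuousOn f (Set.Icc a b)) :
    ∫ z in a..b, ‖f z‖ ^ 2 * Real.exp (-2 * lam * z)
      = (∫ z in a..b, (f z).re ^ 2 * Real.exp (-2 * lam * z))
        + ∫ z in a..b, (f z).im ^ 2 * Real.exp (-2 * lam * z) := by
  rw [← Set.uIcc_of_le hab] at hf
  rw [← integral_add (ContinuousOn.intervalIntegrable (by fun_prop))
    (ContinuousOn.intervalIntegrable (by fun_prop))]
  refine integral_congr fun z _ => ?_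
  simp only [Complex.sq_norm, Complex.normSq_apply]
  ring

lemma CarlemanEstimate.complex (hC : CarlemanEstimate a b Ct lam) (hab : a ≤ b)
    {w w' w'' : ℝ → ℂ} (hw : ∀ z ∈ Set.Icc a b, HasDerivAt w (w' z) z)
    (hw' : ∀ z ∈ Set.Icc a b, HasDerivAt w' (w'' z) z) (hw'' : ContinuousOn w'' (Set.Icc a b))
    (hwa : w a = 0) (hw'a : w' a = 0) :
    Ct * (∫ z in a..b, ‖w'' z‖ ^ 2 * Real.exp (-2 * lam * z))
      + Ct * lam * (∫ z in a..b, ‖w' z‖ ^ 2 * Real.exp (-2 * lam * z))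
      + Ct * lam ^ 3 * (∫ z in a..b, ‖w z‖ ^ 2 * Real.exp (-2 * lam * z))
      ≤ ∫ z in a..b, ‖w'' z‖ ^ 2 * Real.exp (-2 * lam * z) := by
  have hre := hC (fun z => (w z).re) (fun z => (w' z).re) (fun z => (w'' z).re)
    (fun z hz => Complex.reCLM.hasFDerivAt.comp_hasDerivAt z (hw z hz))
    (fun z hz => Complex.reCLM.hasFDerivAt.comp_hasDerivAt z (hw' z hz))
    (Complex.continuous_re.comp_continuousOn hw'') (by simp [hwa]) (by simp [hw'a])
  have him := hC (fun z => (w z).im) (fun z => (w' z).im) (fun z => (w'' z).im)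
    (fun z hz => Complex.imCLM.hasFDerivAt.comp_hasDerivAt z (hw z hz))
    (fun z hz => Complex.imCLM.hasFDerivAt.comp_hasDerivAt z (hw' z hz))
    (Complex.continuous_im.comp_continuousOn hw'') (by simp [hwa]) (by simp [hw'a])
  have hcont : ∀ {f f' : ℝ → ℂ}, (∀ z ∈ Set.Icc a b, HasDerivAt f (f' z) z) →
      ContinuousOn f (Set.Icc a b) :=
    fun hf z hz => (hf z hz).continuousAt.continuousWithinAt
  rw [integral_norm_sq_mul_exp_eq hab hw'', integral_norm_sq_mul_exp_eq hab (hcont hw'),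
    integral_norm_sq_mul_exp_eq hab (hcont hw)]
  linarith

lemma CarlemanEstimate.gridEnergy_le (hC : CarlemanEstimate a b Ct lam) (hab : a ≤ b) (N : ℕ)
    (h : ℝ) {u uz uzz : ℤ → ℤ → ℝ → ℂ}
    (hu : ∀ j s, ∀ z ∈ Set.Icc a b, HasDerivAt (u j s) (uz j s z) z)
    (huz : ∀ j s, ∀ z ∈ Set.Icc a b, HasDerivAt (uz j s) (uzz j s z) z)
    (huzz : ∀ j s, ContinuousOn (uzz j s) (Set.Icc a b))
    (hua : ∀ j s, u j s a = 0) (huza : ∀ j s, uz j s a = 0) :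
    Ct * gridEnergy N h a b lam uzz + Ct * lam * gridEnergy N h a b lam uz
      + Ct * lam ^ 3 * gridEnergy N h a b lam u ≤ gridEnergy N h a b lam uzz := by
  simp only [gridEnergy, Finset.mul_sum, ← Finset.sum_add_distrib]
  refine Finset.sum_le_sum fun j _ => Finset.sum_le_sum fun s _ => ?_
  have := mul_le_mul_of_nonneg_left
    (hC.complex hab (hu j s) (huz j s) (huzz j s) (hua j s) (huza j s)) (sq_nonneg h)
  linarith

end Carleman

lemma carleman_absorb {A B Q P Ct K lam : ℝ} (hB : 0 ≤ B) (hQ : 0 ≤ Q) (hP : 0 ≤ P)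
    (hCt : 0 < Ct) (hlam : 1 ≤ lam) (hK : 4 * K ≤ Ct * lam)
    (hcarl : Ct * B + Ct * lam * Q + Ct * lam ^ 3 * P ≤ B) (hlap : B / 2 - K * P ≤ A) :
    Ct / 4 * B + Ct / 4 * lam * Q + Ct / 4 * lam ^ 3 * P ≤ A := by
  have hcube : Ct * lam ≤ Ct * lam ^ 3 := by gcongr; exact le_self_pow₀ hlam (by norm_num)
  have hKP : 4 * K * P ≤ Ct * lam ^ 3 * P := mul_le_mul_of_nonneg_right (hK.trans hcube) hP
  linarith [mul_nonneg hCt.le hB, mul_nonneg (mul_nonneg hCt.le (zero_le_one.trans hlam)) hQ]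

theorem carleman_semidiscrete_general (ξ d h : ℝ) (N : ℕ) (hξ : 0 < ξ) (hd : 0 < d)
    (Ct lam₀ : ℝ) (hCt : 0 < Ct) (hlam₀ : 1 < lam₀)
    (h1d : ∀ lam ≥ lam₀, ∀ w w' w'' : ℝ → ℝ,
      (∀ z ∈ Set.Icc (-ξ) d, HasDerivAt w (w' z) z) →
      (∀ z ∈ Set.Icc (-ξ) d, HasDerivAt w' (w'' z) z) →
      ContinuousOn w'' (Set.Icc (-ξ) d) →
      w (-ξ) = 0 → w' (-ξ) = 0 →
      (∫ z in (-ξ)..d, (w'' z) ^ 2 * Real.exp (-2 * lam * z)) ≥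
        Ct * (∫ z in (-ξ)..d, (w'' z) ^ 2 * Real.exp (-2 * lam * z))
        + Ct * lam * (∫ z in (-ξ)..d, (w' z) ^ 2 * Real.exp (-2 * lam * z))
        + Ct * lam ^ 3 * (∫ z in (-ξ)..d, (w z) ^ 2 * Real.exp (-2 * lam * z))) :
    ∃ C > (0 : ℝ), ∃ lam₁ ≥ lam₀, ∀ lam ≥ lam₁,
      ∀ u uz uzz : ℤ → ℤ → ℝ → ℂ,
        (∀ j s z, HasDerivAt (u j s) (uz j s z) z) →
        (∀ j s z, HasDerivAt (uz j s) (uzz j s z) z) →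
        (∀ j s, Continuous (uzz j s)) →
        (∀ j s z, (j ∉ Finset.Icc (1 : ℤ) (N : ℤ) ∨ s ∉ Finset.Icc (1 : ℤ) (N : ℤ)) →
          u j s z = 0) →
        (∀ j s, u j s (-ξ) = 0) → (∀ j s, uz j s (-ξ) = 0) →
        (∑ j ∈ Finset.Icc (1 : ℤ) (N : ℤ), ∑ s ∈ Finset.Icc (1 : ℤ) (N : ℤ),
            h ^ 2 * ∫ z in (-ξ)..d,
              (‖discLap h u uzz j s z‖) ^ 2 * Real.exp (-2 * lam * z)) ≥
          C * (∑ j ∈ Finset.Icc (1 : ℤ) (N : ℤ), ∑ s ∈ Finset.Icc (1 : ℤ) (N : ℤ),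
              h ^ 2 * ∫ z in (-ξ)..d,
                (‖uzz j s z‖) ^ 2 * Real.exp (-2 * lam * z))
          + C * lam * (∑ j ∈ Finset.Icc (1 : ℤ) (N : ℤ), ∑ s ∈ Finset.Icc (1 : ℤ) (N : ℤ),
              h ^ 2 * ∫ z in (-ξ)..d,
                (‖uz j s z‖) ^ 2 * Real.exp (-2 * lam * z))
          + C * lam ^ 3 * (∑ j ∈ Finset.Icc (1 : ℤ) (N : ℤ), ∑ s ∈ Finset.Icc (1 : ℤ) (N : ℤ),
              h ^ 2 * ∫ z in (-ξ)..d,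
                (‖u j s z‖) ^ 2 * Real.exp (-2 * lam * z)) := by
  refine ⟨Ct / 4, by positivity, max lam₀ (4 * (72 / h ^ 4) / Ct), le_max_left _ _, ?_⟩
  intro lam hlam u uz uzz hu huz huzz hbox hu0 huz0
  have hab : -ξ ≤ d := by linarith
  have hlam₀' : lam₀ ≤ lam := (le_max_left _ _).trans hlam
  have hK : 4 * (72 / h ^ 4) ≤ Ct * lam := by
    rw [← div_le_iff₀' hCt]; exact (le_max_right _ _).trans hlam
  have hC : CarlemanEstimate (-ξ) d Ct lam := h1d lam hlam₀'
  have hcarl := hC.gridEnergy_le hab N h (fun j s z _ => hu j s z)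
    (fun j s z _ => huz j s z) (fun j s => (huzz j s).continuousOn) hu0 huz0
  have hlap := gridEnergy_discLap_ge (N := N) (h := h) (lam := lam) hab
    (fun j s => continuous_iff_continuousAt.2 fun z => (hu j s z).continuousAt) huzz hbox
  exact carleman_absorb (gridEnergy_nonneg hab _) (gridEnergy_nonneg hab _)
    (gridEnergy_nonneg hab _) hCt (by linarith) hK hcarl hlap

/-- Semidiscrete Carleman estimate (Theorem 7.1): assuming the 1D Carleman estimate with
constants `C̃ > 0`, `λ₀ > 1`, there exist `C = C(ξ,d,h) > 0` and `λ₁ ≥ λ₀` such that for all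
`λ ≥ λ₁` and all semidiscrete functions `u` vanishing at the grid boundary and with
`u = u_z = 0` at `z = −ξ`:
`Σ h² ∫ |Δʰu|² φ_λ ≥ C Σ h² ∫ |u_zz|² φ_λ + C λ Σ h² ∫ |u_z|² φ_λ + C λ³ Σ h² ∫ |u|² φ_λ`. -/
theorem carleman_semidiscrete (ξ d h : ℝ) (N : ℕ) (hξ : 0 < ξ) (hd : 0 < d) (hh : 0 < h)
    (Ct lam₀ : ℝ) (hCt : 0 < Ct) (hlam₀ : 1 < lam₀)
    (h1d : ∀ lam ≥ lam₀, ∀ w w' w'' : ℝ → ℝ,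
      (∀ z ∈ Set.Icc (-ξ) d, HasDerivAt w (w' z) z) →
      (∀ z ∈ Set.Icc (-ξ) d, HasDerivAt w' (w'' z) z) →
      ContinuousOn w'' (Set.Icc (-ξ) d) →
      w (-ξ) = 0 → w' (-ξ) = 0 →
      (∫ z in (-ξ)..d, (w'' z) ^ 2 * Real.exp (-2 * lam * z)) ≥
        Ct * (∫ z in (-ξ)..d, (w'' z) ^ 2 * Real.exp (-2 * lam * z))
        + Ct * lam * (∫ z in (-ξ)..d, (w' z) ^ 2 * Real.exp (-2 * lam * z))
        + Ct * lam ^ 3 * (∫ z in (-ξ)..d, (w z) ^ 2 * Real.exp (-2 * lam * z))) :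
    ∃ C > (0 : ℝ), ∃ lam₁ ≥ lam₀, ∀ lam ≥ lam₁,
      ∀ u uz uzz : ℤ → ℤ → ℝ → ℂ,
        (∀ j s z, HasDerivAt (u j s) (uz j s z) z) →
        (∀ j s z, HasDerivAt (uz j s) (uzz j s z) z) →
        (∀ j s, Continuous (uzz j s)) →
        (∀ j s z, (j ∉ Finset.Icc (1 : ℤ) (N : ℤ) ∨ s ∉ Finset.Icc (1 : ℤ) (N : ℤ)) →
          u j s z = 0) →
        (∀ j s, u j s (-ξ) = 0) → (∀ j s, uz j s (-ξ) = 0) →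
        (∑ j ∈ Finset.Icc (1 : ℤ) (N : ℤ), ∑ s ∈ Finset.Icc (1 : ℤ) (N : ℤ),
            h ^ 2 * ∫ z in (-ξ)..d,
              (‖discLap h u uzz j s z‖) ^ 2 * Real.exp (-2 * lam * z)) ≥
          C * (∑ j ∈ Finset.Icc (1 : ℤ) (N : ℤ), ∑ s ∈ Finset.Icc (1 : ℤ) (N : ℤ),
              h ^ 2 * ∫ z in (-ξ)..d,
                (‖uzz j s z‖) ^ 2 * Real.exp (-2 * lam * z))
          + C * lam * (∑ j ∈ Finset.Icc (1 : ℤ) (N : ℤ), ∑ s ∈ Finset.Icc (1 : ℤ) (N : ℤ),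
              h ^ 2 * ∫ z in (-ξ)..d,
                (‖uz j s z‖) ^ 2 * Real.exp (-2 * lam * z))
          + C * lam ^ 3 * (∑ j ∈ Finset.Icc (1 : ℤ) (N : ℤ), ∑ s ∈ Finset.Icc (1 : ℤ) (N : ℤ),
              h ^ 2 * ∫ z in (-ξ)..d,
                (‖u j s z‖) ^ 2 * Real.exp (-2 * lam * z)) :=
  carleman_semidiscrete_general ξ d h N hξ hd Ct lam₀ hCt hlam₀ h1d
end

section
/- Under the hypotheses of the gradient projection convergence theorem, suppose additionally that p* ∈ B̄(R) satisfies J(p*) ≤ ε (for some ε ≥ 0) where J ≥ 0. Then ‖p* − p_min‖² ≤ ε/α, and consequently for every n ≥ 1: ‖p* − p_n‖ ≤ (ε/α)^{1/2} + θⁿ ‖p_min − p₀‖. -/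
theorem norm_sub_le_sqrt_add_of_sq_norm_sub_le {E : Type*} [SeminormedAddCommGroup E]
    {x y z : E} {c d : ℝ} (hyx : ‖y - x‖ ^ 2 ≤ c) (hxz : ‖x - z‖ ≤ d) :
    ‖y - z‖ ≤ Real.sqrt c + d :=
  calc ‖y - z‖ ≤ ‖y - x‖ + ‖x - z‖ := norm_sub_le_norm_sub_add_norm_sub _ _ _
    _ ≤ Real.sqrt c + d := add_le_add (Real.le_sqrt_of_sq_le hyx) hxz

theorem sq_norm_sub_le_div_of_strongConvex_of_inner_nonneg
    {H : Type*} [NormedAddCommGroup H] [InnerProductSpace ℝ H] {s : Set H} {J : H → ℝ} {J' : H → H}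
    {α ε : ℝ} {x y : H} (hα : 0 < α)
    (hconv : ∀ q ∈ s, ∀ r : H, q + r ∈ s → α * ‖r‖ ^ 2 ≤ J (q + r) - J q - inner ℝ (J' q) r)
    (hx : x ∈ s) (hy : y ∈ s) (hvar : 0 ≤ inner ℝ (J' x) (y - x)) (hJx : 0 ≤ J x)
    (hJy : J y ≤ ε) :
    ‖y - x‖ ^ 2 ≤ ε / α := by
  have hstrong := hconv x hx (y - x) (by rwa [add_sub_cancel])
  rw [add_sub_cancel] at hstrong
  rw [le_div_iff₀ hα]
  linarith

theorem convergence_to_exact_solution_general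
    {H : Type*} [NormedAddCommGroup H] [InnerProductSpace ℝ H]
    (R α θ ε : ℝ) (hα : 0 < α)
    (J : H → ℝ) (J' : H → H) (pmin pstar : H) (p : ℕ → H)
    (hJnonneg : ∀ q ∈ Metric.closedBall (0 : H) R, 0 ≤ J q)
    (hconv : ∀ q ∈ Metric.closedBall (0 : H) R, ∀ r : H,
      q + r ∈ Metric.closedBall (0 : H) R →
      α * ‖r‖ ^ 2 ≤ J (q + r) - J q - (inner ℝ (J' q) r : ℝ))
    (hpmin : pmin ∈ Metric.closedBall (0 : H) R)
    (hpstar : pstar ∈ Metric.closedBall (0 : H) R)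
    (hvar : 0 ≤ (inner ℝ (J' pmin) (pstar - pmin) : ℝ))
    (hJstar : J pstar ≤ ε)
    (hlin : ∀ n : ℕ, ‖pmin - p n‖ ≤ θ ^ n * ‖pmin - p 0‖) :
    ‖pstar - pmin‖ ^ 2 ≤ ε / α ∧
    ∀ n : ℕ, 1 ≤ n → ‖pstar - p n‖ ≤ Real.sqrt (ε / α) + θ ^ n * ‖pmin - p 0‖ := by
  have hdist : ‖pstar - pmin‖ ^ 2 ≤ ε / α :=
    sq_norm_sub_le_div_of_strongConvex_of_inner_nonneg hα hconv hpmin hpstar hvar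
      (hJnonneg pmin hpmin) hJstar
  exact ⟨hdist, fun n _ => norm_sub_le_sqrt_add_of_sq_norm_sub_le hdist (hlin n)⟩

/-- Convergence estimates (4.7), (4.10) of Theorem 7.6 in abstract form: if `J ≥ 0` on the
ball, `J` is `α`-strongly convex there, `p*` satisfies `J(p*) ≤ ε`, the variational
inequality `⟨J′(p_min), p* − p_min⟩ ≥ 0` holds, and the iterates converge linearly to
`p_min`, then `‖p* − p_min‖² ≤ ε/α` and
`‖p* − p_n‖ ≤ (ε/α)^{1/2} + θⁿ‖p_min − p₀‖` for all `n ≥ 1`. -/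
theorem convergence_to_exact_solution
    {H : Type*} [NormedAddCommGroup H] [InnerProductSpace ℝ H] [CompleteSpace H]
    (R α θ ε : ℝ) (hR : 0 < R) (hα : 0 < α) (hθ : θ ∈ Set.Ioo (0 : ℝ) 1) (hε : 0 ≤ ε)
    (J : H → ℝ) (J' : H → H) (pmin pstar : H) (p : ℕ → H)
    (hJnonneg : ∀ q ∈ Metric.closedBall (0 : H) R, 0 ≤ J q)
    (hconv : ∀ q ∈ Metric.closedBall (0 : H) R, ∀ r : H,
      q + r ∈ Metric.closedBall (0 : H) R →
      α * ‖r‖ ^ 2 ≤ J (q + r) - J q - (inner ℝ (J' q) r : ℝ))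
    (hpmin : pmin ∈ Metric.closedBall (0 : H) R)
    (hpstar : pstar ∈ Metric.closedBall (0 : H) R)
    (hvar : 0 ≤ (inner ℝ (J' pmin) (pstar - pmin) : ℝ))
    (hJstar : J pstar ≤ ε)
    (hlin : ∀ n : ℕ, ‖pmin - p n‖ ≤ θ ^ n * ‖pmin - p 0‖) :
    ‖pstar - pmin‖ ^ 2 ≤ ε / α ∧
    ∀ n : ℕ, 1 ≤ n → ‖pstar - p n‖ ≤ Real.sqrt (ε / α) + θ ^ n * ‖pmin - p 0‖ :=
  convergence_to_exact_solution_general R α θ ε hα J J' pmin pstar p hJnonneg hconv hpmin hpstar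
    hvar hJstar hlin
end
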